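/- arXiv:1606.02660 — 2 statements merged into one kernel-verified Lean document; each statement's English description precedes it below -/
import Mathlib

section
/- The number of independent sets in the lex graph L(n,k,w) equals 2^(n-k-1) + 2^(n-k-w-1) + k. -/
/-- Number of homomorphisms from a simple graph `G` to a graph-with-loops given
by an adjacency relation `H`. -/
noncomputable def homCount {V W : Type*} (G : SimpleGraph V) (H : W → W → Prop) : ℕ :=
  Nat.card {f : V → W // ∀ a b, G.Adj a b → H (f a) (f b)}

/-- Number of independent sets of a simple graph (including the empty set). -/
noncomputable def indCount {V : Type*} (G : SimpleGraph V) : ℕ :=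
  Nat.card {s : Finset V // ∀ a ∈ s, ∀ b ∈ s, ¬ G.Adj a b}

/-- Number of edges of a simple graph. -/
noncomputable def edgeCount {V : Type*} (G : SimpleGraph V) : ℕ := Nat.card G.edgeSet

/-- The lex graph `L(n,m)`: edges are the first `m` pairs in lexicographic order. -/
def lexGraph (n m : ℕ) : SimpleGraph (Fin n) where
  Adj a b := a ≠ b ∧
    (min a.val b.val) * (n - 1) - (min a.val b.val) * ((min a.val b.val) - 1) / 2
      + (max a.val b.val - min a.val b.val - 1) < m
  symm := by
    constructor
    intro a b h
    obtain ⟨h1, h2⟩ := h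
    refine ⟨h1.symm, ?_⟩
    rwa [min_comm, max_comm]
  loopless := by constructor; intro a h; exact h.1 rfl

/-- Disjoint union of a graph with `r` isolated vertices. -/
def addIsolates {V : Type*} (G : SimpleGraph V) (r : ℕ) : SimpleGraph (V ⊕ Fin r) where
  Adj x y := ∃ a b, x = Sum.inl a ∧ y = Sum.inl b ∧ G.Adj a b
  symm := by constructor; rintro x y ⟨a, b, rfl, rfl, h⟩; exact ⟨b, a, rfl, rfl, h.symm⟩
  loopless := by
    constructor
    rintro x ⟨a, b, rfl, h1, h2⟩
    cases Sum.inl.inj h1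
    exact G.irrefl h2

/-- The graph `J` (loop-threshold code 010): vertex 0 is isolated, vertex 1 is
unlooped and adjacent to vertex 2, which is looped. -/
def Jrel : Fin 3 → Fin 3 → Prop := fun x y =>
  (x = 1 ∧ y = 2) ∨ (x = 2 ∧ y = 1) ∨ (x = 2 ∧ y = 2)

open Classical in
/-- The independence polynomial of a graph. -/
noncomputable def indPoly {V : Type*} [Fintype V] (G : SimpleGraph V) (x : ℝ) : ℝ :=
  ∑ s ∈ Finset.univ.filter (fun s : Finset V => ∀ a ∈ s, ∀ b ∈ s, ¬ G.Adj a b), x ^ s.card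

/-- The lex graph `L(n,k,w)`: a clique on the first `k` vertices, each dominating,
together with a star with `w` edges centered at vertex `k` inside the remaining
independent part. -/
def lexKW (n k w : ℕ) : SimpleGraph (Fin n) where
  Adj a b := a ≠ b ∧ (a.val < k ∨ b.val < k ∨
    (a.val = k ∧ b.val ≤ k + w) ∨ (b.val = k ∧ a.val ≤ k + w))
  symm := by constructor; intro a b h; obtain ⟨h1, h2⟩ := h; exact ⟨h1.symm, by tauto⟩
  loopless := by constructor; intro a h; exact h.1 rfl

/-! The vertices `0, …, k-1` of the clique are adjacent to every other vertex, so the only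
independent sets meeting the clique are the `k` singletons. The remaining vertices
`k, …, n-1` span a star with centre `k` and leaves `k+1, …, k+w`, plus isolated vertices;
by the recursion `i(G[W]) = i(G[W - c]) + i(G[W - N[c]])` at the centre `c = k`, they
contribute the `2^(n-k-1)` subsets of `{k+1, …, n-1}` and the `2^(n-k-w-1)` subsets of
`{k+w+1, …, n-1}`. -/

open Finset

namespace SimpleGraph

variable {V : Type*} (G : SimpleGraph V) [DecidableRel G.Adj]

def indepSubsets (W : Finset V) : Finset (Finset V) :=
  {s ∈ W.powerset | ∀ a ∈ s, ∀ b ∈ s, ¬ G.Adj a b}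

variable {G}

lemma mem_indepSubsets {W s : Finset V} :
    s ∈ G.indepSubsets W ↔ s ⊆ W ∧ ∀ a ∈ s, ∀ b ∈ s, ¬ G.Adj a b := by
  simp [indepSubsets]

lemma indCount_eq_card_indepSubsets_univ [Fintype V] : indCount G = #(G.indepSubsets univ) := by
  rw [indCount, Nat.card_eq_fintype_card, Fintype.card_subtype]
  simp only [indepSubsets, powerset_univ]

lemma indepSubsets_eq_powerset {W : Finset V} (hW : ∀ a ∈ W, ∀ b ∈ W, ¬ G.Adj a b) :
    G.indepSubsets W = W.powerset :=
  filter_true_of_mem fun _ hs a ha b hb => hW a (mem_powerset.1 hs ha) b (mem_powerset.1 hs hb)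

@[simp]
lemma indepSubsets_empty : G.indepSubsets ∅ = {∅} := by
  simp [indepSubsets]

variable [DecidableEq V]

lemma filter_notMem_indepSubsets (W : Finset V) (c : V) :
    {s ∈ G.indepSubsets W | c ∉ s} = G.indepSubsets (W.erase c) := by
  ext s
  simp only [mem_filter, mem_indepSubsets, subset_erase]
  tauto

lemma card_filter_mem_indepSubsets {W : Finset V} {c : V} (hc : c ∈ W) :
    #{s ∈ G.indepSubsets W | c ∈ s} = #(G.indepSubsets {v ∈ W | v ≠ c ∧ ¬ G.Adj c v}) := by
  refine card_nbij' (·.erase c) (insert c) ?_ ?_ ?_ ?_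
  · intro s hs
    obtain ⟨hs, hcs⟩ := mem_filter.1 hs
    obtain ⟨hsW, hs⟩ := mem_indepSubsets.1 hs
    refine mem_indepSubsets.2 ⟨fun v hv => ?_, fun a ha b hb => ?_⟩
    · obtain ⟨hvc, hv⟩ := mem_erase.1 hv
      exact mem_filter.2 ⟨hsW hv, hvc, hs c hcs v hv⟩
    · exact hs a (mem_of_mem_erase ha) b (mem_of_mem_erase hb)
  · intro t ht
    obtain ⟨htW, ht⟩ := mem_indepSubsets.1 ht
    have hct : ∀ v ∈ t, v ≠ c ∧ ¬ G.Adj c v := fun v hv => (mem_filter.1 (htW hv)).2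
    refine mem_filter.2 ⟨mem_indepSubsets.2 ⟨?_, ?_⟩, mem_insert_self c t⟩
    · exact insert_subset hc fun v hv => (mem_filter.1 (htW hv)).1
    · simp only [mem_insert, forall_eq_or_imp, G.irrefl, not_false_eq_true, true_and]
      exact ⟨fun b hb => (hct b hb).2, fun a ha => ⟨fun h => (hct a ha).2 h.symm, ht a ha⟩⟩
  · intro s hs
    exact insert_erase (mem_filter.1 hs).2
  · intro t ht
    exact erase_insert fun hct => ((mem_filter.1 ((mem_indepSubsets.1 ht).1 hct)).2.1 rfl)

lemma card_indepSubsets_erase_add {W : Finset V} {c : V} (hc : c ∈ W) :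
    #(G.indepSubsets W) =
      #(G.indepSubsets (W.erase c)) + #(G.indepSubsets {v ∈ W | v ≠ c ∧ ¬ G.Adj c v}) := by
  rw [← card_filter_add_card_filter_not (s := G.indepSubsets W) (c ∈ ·), add_comm,
    card_filter_mem_indepSubsets hc, filter_notMem_indepSubsets]

lemma card_indepSubsets_sdiff_add {W D : Finset V} (hDW : D ⊆ W)
    (hD : ∀ d ∈ D, ∀ v, v ≠ d → G.Adj d v) :
    #(G.indepSubsets W) = #(G.indepSubsets (W \ D)) + #D := by
  induction D using Finset.induction_on with
  | empty => simp
  | insert d D hdD ih =>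
    have hd : d ∈ W \ D := mem_sdiff.2 ⟨hDW (mem_insert_self d D), hdD⟩
    have hnonadj : {v ∈ W \ D | v ≠ d ∧ ¬ G.Adj d v} = ∅ :=
      filter_false_of_mem fun v _ ⟨hvd, hv⟩ => hv (hD d (mem_insert_self d D) v hvd)
    rw [ih ((subset_insert d D).trans hDW) fun d' hd' => hD d' (mem_insert_of_mem hd'),
      card_indepSubsets_erase_add hd, hnonadj, indepSubsets_empty, card_singleton, sdiff_insert,
      card_insert_of_notMem hdD]
    ring

end SimpleGraph

instance (n k w : ℕ) : DecidableRel (lexKW n k w).Adj :=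
  fun _ _ => inferInstanceAs (Decidable (_ ∧ _))

section

variable {n k w : ℕ}

lemma lexKW_adj_of_val_lt {a b : Fin n} (ha : a.val < k) (hba : b ≠ a) : (lexKW n k w).Adj a b :=
  ⟨hba.symm, Or.inl ha⟩

lemma lexKW_not_adj_of_mem_Ioi {m : Fin n} (hkm : k ≤ m.val) :
    ∀ a ∈ Ioi m, ∀ b ∈ Ioi m, ¬ (lexKW n k w).Adj a b := by
  simp only [mem_Ioi, Fin.lt_def]
  rintro a ha b hb ⟨-, h⟩
  omega

end

theorem indCount_lexKW_general (n k w : ℕ) (hw : w + k + 2 ≤ n) :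
    indCount (lexKW n k w) = 2 ^ (n - k - 1) + 2 ^ (n - k - w - 1) + k := by
  let c : Fin n := ⟨k, by omega⟩
  let e : Fin n := ⟨k + w, by omega⟩
  have hclique : univ \ Iio c = Ici c := by ext; simp
  have hleaves : {v ∈ Ici c | v ≠ c ∧ ¬ (lexKW n k w).Adj c v} = Ioi e := by
    ext v
    simp only [mem_filter, mem_Ici, mem_Ioi, Fin.le_def, Fin.lt_def, ne_eq, Fin.ext_iff, lexKW, c, e,
      true_and]
    omega
  rw [SimpleGraph.indCount_eq_card_indepSubsets_univ,
    SimpleGraph.card_indepSubsets_sdiff_add (subset_univ (Iio c))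
      fun d hd v hv => lexKW_adj_of_val_lt (Fin.lt_def.1 (mem_Iio.1 hd)) hv,
    hclique, SimpleGraph.card_indepSubsets_erase_add (mem_Ici.2 le_rfl), Ici_erase, hleaves,
    SimpleGraph.indepSubsets_eq_powerset (lexKW_not_adj_of_mem_Ioi le_rfl),
    SimpleGraph.indepSubsets_eq_powerset (lexKW_not_adj_of_mem_Ioi (Nat.le_add_right k w)),
    card_powerset, card_powerset, Fin.card_Ioi, Fin.card_Ioi, Fin.card_Iio]
  congr 3 <;> simp only [c, e] <;> omega

/-- The number of independent sets in the lex graph `L(n,k,w)` equals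
`2^(n-k-1) + 2^(n-k-w-1) + k`. -/
theorem indCount_lexKW (n k w : ℕ) (hk : 1 ≤ k) (hw : w + k + 2 ≤ n) :
    indCount (lexKW n k w) = 2 ^ (n - k - 1) + 2 ^ (n - k - w - 1) + k :=
  indCount_lexKW_general n k w hw
end

section
/- For all integers n, k, w with k ≥ 1 and 1 ≤ w ≤ n-k-2, we have 3·(2^(n-k-2) + 2^(n-2k-w-2) + k) > 2^(n-k-1) + 2^(n-k-w-1) + k. -/
theorem subcase_1a_general (n k w : ℤ) (hk : 1 ≤ k) (hw : 1 ≤ w) :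
    (2 : ℝ) ^ (n - k - 1) + 2 ^ (n - k - w - 1) + k
      < 3 * ((2 : ℝ) ^ (n - k - 2) + 2 ^ (n - 2 * k - w - 2) + k) := by
  have hdouble : (2 : ℝ) ^ (n - k - 1) = 2 * 2 ^ (n - k - 2) := by
    rw [show n - k - 1 = n - k - 2 + 1 by ring, zpow_add_one₀ two_ne_zero, mul_comm]
  have hsmall : (2 : ℝ) ^ (n - k - w - 1) ≤ 2 ^ (n - k - 2) :=
    zpow_le_zpow_right₀ one_le_two (by omega)
  have hpos : (0 : ℝ) < 2 ^ (n - 2 * k - w - 2) := by positivity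
  have hk_pos : (0 : ℝ) < k := by exact_mod_cast hk
  linarith

/-- Subcase 1a of the main theorem:
`3·(2^(n-k-2) + 2^(n-2k-w-2) + k) > 2^(n-k-1) + 2^(n-k-w-1) + k`. -/
theorem subcase_1a (n k w : ℤ) (hk : 1 ≤ k) (hw : 1 ≤ w) (hw2 : w ≤ n - k - 2) :
    (2 : ℝ) ^ (n - k - 1) + 2 ^ (n - k - w - 1) + k
      < 3 * ((2 : ℝ) ^ (n - k - 2) + 2 ^ (n - 2 * k - w - 2) + k) :=
  subcase_1a_general n k w hk hw
end
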